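/- arXiv:2504.11179 — 2 statements merged into one kernel-verified Lean document; each statement's English description precedes it below -/
import Mathlib

section
/- Let 𝕂 be a complete algebraically closed nonarchimedean valued field, ψ = ∏_{i=1}^{s}(x - α_i)^e with α_i ∈ 𝕂, and let r ∈ ℚ. Then for any β ∈ 𝕂: v(ψ(β)) ≥ θ_ψ(r) if and only if there exists i with v(β - α_i) ≥ r, where θ_ψ(r) = e·r·|I_r| + e·Σ_{i∈J_r} v(α_1 - α_i) and the multisets of pairwise distances {v(α_j - α_i)}_i are independent of j. -/
/-!
Let `α j` be a root closest to `β`. The ultrametric inequality gives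
`v (β - α i) = min (v (β - α j)) (v (α j - α i))` for every `i`, so
`v (ψ β) = e • ∑ i, min (v (β - α j)) (v (α j - α i))`. By the orbit condition `θ_ψ(r)` may be
computed from `α j` instead of `α 0`, and it equals `e • ∑ i, min r (v (α j - α i))`. The two
sums compare termwise, strictly at `i = j` (where `v (α j - α j) = ⊤`) unless
`r ≤ v (β - α j)`.
-/

open Finset Polynomial

namespace WithTop

variable {α : Type*}

lemma nsmul_top [AddMonoid α] {n : ℕ} (hn : n ≠ 0) : n • (⊤ : WithTop α) = ⊤ := by
  obtain ⟨m, rfl⟩ := Nat.exists_eq_succ_of_ne_zero hn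
  rw [succ_nsmul, add_top]

lemma natCast_mul_eq_nsmul [DecidableEq α] [NonAssocSemiring α] [CharZero α] {n : ℕ}
    (hn : n ≠ 0) (x : WithTop α) : (n : WithTop α) * x = n • x := by
  induction x with
  | top => rw [mul_top (by exact_mod_cast hn), nsmul_top hn]
  | coe a => rw [← coe_natCast, ← coe_mul, ← coe_nsmul, nsmul_eq_mul]

lemma nsmul_le_nsmul_iff_of_ne_top [AddCommMonoid α] [LinearOrder α] [IsOrderedCancelAddMonoid α]
    {n : ℕ} (hn : n ≠ 0) {x : WithTop α} (hx : x ≠ ⊤) (y : WithTop α) :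
    n • x ≤ n • y ↔ x ≤ y := by
  lift x to α using hx
  induction y with
  | top => simp [nsmul_top hn]
  | coe b => rw [← coe_nsmul, ← coe_nsmul, coe_le_coe, coe_le_coe, nsmul_le_nsmul_iff_right hn]

end WithTop

section TruncatedSum

variable {ι : Type*} [Fintype ι]

lemma sum_comp_eq_of_map_univ_eq {β M : Type*} [AddCommMonoid M] {f g : ι → β}
    (h : univ.val.map f = univ.val.map g) (φ : β → M) : ∑ i, φ (f i) = ∑ i, φ (g i) := by
  simpa only [Multiset.map_map, sum_map_val, Function.comp_apply]
    using congrArg (fun m => (m.map φ).sum) h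

variable {Γ : Type*} [AddCommMonoid Γ] [LinearOrder Γ]

lemma sum_min_eq_card_nsmul_add_sum (c : Γ) (d : ι → Γ) :
    ∑ i, min c (d i) = #{i | c ≤ d i} • c + ∑ i with d i < c, d i := by
  classical
  rw [← sum_filter_add_sum_filter_not univ (fun i => c ≤ d i)]
  simp_rw [not_le]
  congr 1
  · rw [← sum_const]
    exact sum_congr rfl fun i hi => min_eq_left (mem_filter.1 hi).2
  · exact sum_congr rfl fun i hi => min_eq_right (mem_filter.1 hi).2.le

lemma sum_min_coe_ne_top (r : Γ) (d : ι → WithTop Γ) : ∑ i, min (r : WithTop Γ) (d i) ≠ ⊤ :=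
  WithTop.sum_ne_top.2 fun _ _ => ne_top_of_le_ne_top WithTop.coe_ne_top (min_le_left _ _)

lemma sum_min_coe_le_sum_min_iff [IsOrderedCancelAddMonoid Γ] {d : ι → WithTop Γ} {j : ι}
    (hj : d j = ⊤) (r : Γ) (b : WithTop Γ) :
    ∑ i, min (r : WithTop Γ) (d i) ≤ ∑ i, min b (d i) ↔ (r : WithTop Γ) ≤ b := by
  classical
  refine ⟨fun h => ?_, fun h => sum_le_sum fun i _ => min_le_min_right _ h⟩
  by_contra! hb
  rw [Fintype.sum_eq_add_sum_compl j, Fintype.sum_eq_add_sum_compl j (fun i => min b (d i)), hj,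
    min_top_right, min_top_right] at h
  have hrest : ∑ i ∈ {j}ᶜ, min b (d i) ≤ ∑ i ∈ {j}ᶜ, min (r : WithTop Γ) (d i) :=
    sum_le_sum fun i _ => min_le_min_right _ hb.le
  have hfin : ∑ i ∈ {j}ᶜ, min b (d i) ≠ ⊤ :=
    WithTop.sum_ne_top.2 fun _ _ => ne_top_of_le_ne_top hb.ne_top (min_le_left _ _)
  exact (WithTop.add_lt_add_of_lt_of_le hfin hb hrest).not_ge h

end TruncatedSum

namespace AddValuation

lemma map_one_eq_zero_of_eq_top_iff {K Γ : Type*} [MulZeroOneClass K] [Nontrivial K]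
    [AddCancelCommMonoid Γ] {v : K → WithTop Γ} (hv0 : ∀ x, v x = ⊤ ↔ x = 0)
    (hmul : ∀ x y, v (x * y) = v x + v y) : v 1 = 0 := by
  have hv1 : v 1 ≠ ⊤ := fun h => one_ne_zero ((hv0 1).1 h)
  refine (WithTop.add_left_cancel hv1 ?_).symm
  rw [add_zero, ← hmul, one_mul]

def ofEqTopIff {K Γ : Type*} [Ring K] [Nontrivial K] [AddCancelCommMonoid Γ] [LinearOrder Γ]
    [IsOrderedAddMonoid Γ] (v : K → WithTop Γ) (hv0 : ∀ x, v x = ⊤ ↔ x = 0)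
    (hmul : ∀ x y, v (x * y) = v x + v y) (hadd : ∀ x y, min (v x) (v y) ≤ v (x + y)) :
    AddValuation K (WithTop Γ) :=
  .of v ((hv0 0).2 rfl) (map_one_eq_zero_of_eq_top_iff hv0 hmul) hadd hmul

variable {R Γ₀ : Type*} [LinearOrderedAddCommMonoidWithTop Γ₀]

lemma map_add_eq_min_of_le [Ring R] (v : AddValuation R Γ₀) {x y : R} (h : v (x + y) ≤ v x) :
    v (x + y) = min (v x) (v y) := by
  rcases eq_or_ne (v x) (v y) with hxy | hxy
  · rw [← hxy, min_self]
    exact h.antisymm (by simpa [hxy] using v.map_add x y)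
  · exact v.map_add_of_distinct_val hxy

lemma map_prod [CommRing R] (v : AddValuation R Γ₀) {κ : Type*} (s : Finset κ) (f : κ → R) :
    v (∏ i ∈ s, f i) = ∑ i ∈ s, v (f i) := by
  classical
  induction s using Finset.induction_on with
  | empty => simp
  | insert a s ha ih => rw [prod_insert ha, sum_insert ha, v.map_mul, ih]

lemma map_eval_prod_X_sub_C_pow [CommRing R] (v : AddValuation R Γ₀) {κ : Type*} (s : Finset κ)
    (α : κ → R) (e : ℕ) (β : R) :
    v ((∏ i ∈ s, (X - C (α i)) ^ e).eval β) = e • ∑ i ∈ s, v (β - α i) := by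
  simp [eval_prod, v.map_prod, smul_sum]

end AddValuation

theorem stmt_6_general {𝕂 : Type*} [Field 𝕂] (v : 𝕂 → WithTop ℝ)
    (hv0 : ∀ x : 𝕂, v x = ⊤ ↔ x = 0)
    (hmul : ∀ x y : 𝕂, v (x * y) = v x + v y)
    (hadd : ∀ x y : 𝕂, min (v x) (v y) ≤ v (x + y))
    (s e : ℕ) [NeZero s] (he : 0 < e) (α : Fin s → 𝕂)
    (horb : ∀ j : Fin s,
      Finset.univ.val.map (fun i : Fin s => v (α j - α i)) =
        Finset.univ.val.map (fun i : Fin s => v (α 0 - α i)))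
    (r : ℚ) (β : 𝕂) :
    ((e : WithTop ℝ) * (((r : ℝ) : WithTop ℝ)) *
        ((Finset.univ.filter
          (fun i : Fin s => ((r : ℝ) : WithTop ℝ) ≤ v (α 0 - α i))).card : WithTop ℝ)
      + (e : WithTop ℝ) *
        ∑ i ∈ Finset.univ.filter
            (fun i : Fin s => v (α 0 - α i) < ((r : ℝ) : WithTop ℝ)),
          v (α 0 - α i))
      ≤ v (Polynomial.eval β (∏ i, (Polynomial.X - Polynomial.C (α i)) ^ e))
    ↔ ∃ i : Fin s, ((r : ℝ) : WithTop ℝ) ≤ v (β - α i) := by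
  obtain ⟨w, rfl⟩ : ∃ w : AddValuation 𝕂 (WithTop ℝ), ⇑w = v :=
    ⟨.ofEqTopIff v hv0 hmul hadd, rfl⟩
  obtain ⟨j, -, hj⟩ := exists_max_image univ (fun i => w (β - α i)) univ_nonempty
  have hθ : (e : WithTop ℝ) * ((r : ℝ) : WithTop ℝ) * #{i | (r : ℝ) ≤ w (α 0 - α i)}
      + (e : WithTop ℝ) * ∑ i with w (α 0 - α i) < (r : ℝ), w (α 0 - α i)
      = e • ∑ i, min ((r : ℝ) : WithTop ℝ) (w (α j - α i)) := by
    have hcoe (n : ℕ) :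
        (e : WithTop ℝ) * ((r : ℝ) : WithTop ℝ) * n = e • n • ((r : ℝ) : WithTop ℝ) := by
      norm_cast
      simp only [nsmul_eq_mul]
      push_cast
      ring
    rw [sum_comp_eq_of_map_univ_eq (horb j), sum_min_eq_card_nsmul_add_sum, nsmul_add, hcoe,
      WithTop.natCast_mul_eq_nsmul he.ne']
  have hψ : w ((∏ i, (X - C (α i)) ^ e).eval β)
      = e • ∑ i, min (w (β - α j)) (w (α j - α i)) := by
    rw [w.map_eval_prod_X_sub_C_pow]
    refine congrArg _ (sum_congr rfl fun i _ => ?_)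
    simpa using w.map_add_eq_min_of_le (x := β - α j) (y := α j - α i)
      (by simpa using hj i (mem_univ i))
  rw [hθ, hψ, WithTop.nsmul_le_nsmul_iff_of_ne_top he.ne' (sum_min_coe_ne_top _ _),
    sum_min_coe_le_sum_min_iff (j := j) (by simp)]
  exact ⟨fun h => ⟨j, h⟩, fun ⟨i, hi⟩ => hi.trans (hj i (mem_univ i))⟩

/-- Splitting of discoids into disks: for `ψ = ∏ᵢ (x - αᵢ)^e` over a complete algebraically
closed nonarchimedean field and `r ∈ ℚ`, a point `β` satisfies `v(ψ(β)) ≥ θ_ψ(r)` if and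
only if `v(β - αᵢ) ≥ r` for some `i`; i.e. `D[ψ, θ_ψ(r)]` is the union of the disks of
radius `r` around the roots of `ψ`. -/
theorem stmt_6 {𝕂 : Type*} [Field 𝕂] [IsAlgClosed 𝕂] (v : 𝕂 → WithTop ℝ)
    (hv0 : ∀ x : 𝕂, v x = ⊤ ↔ x = 0)
    (hmul : ∀ x y : 𝕂, v (x * y) = v x + v y)
    (hadd : ∀ x y : 𝕂, min (v x) (v y) ≤ v (x + y))
    (s e : ℕ) [NeZero s] (he : 0 < e) (α : Fin s → 𝕂)
    (horb : ∀ j : Fin s,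
      Finset.univ.val.map (fun i : Fin s => v (α j - α i)) =
        Finset.univ.val.map (fun i : Fin s => v (α 0 - α i)))
    (r : ℚ) (β : 𝕂) :
    ((e : WithTop ℝ) * (((r : ℝ) : WithTop ℝ)) *
        ((Finset.univ.filter
          (fun i : Fin s => ((r : ℝ) : WithTop ℝ) ≤ v (α 0 - α i))).card : WithTop ℝ)
      + (e : WithTop ℝ) *
        ∑ i ∈ Finset.univ.filter
            (fun i : Fin s => v (α 0 - α i) < ((r : ℝ) : WithTop ℝ)),
          v (α 0 - α i))
      ≤ v (Polynomial.eval β (∏ i, (Polynomial.X - Polynomial.C (α i)) ^ e))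
    ↔ ∃ i : Fin s, ((r : ℝ) : WithTop ℝ) ≤ v (β - α i) :=
  stmt_6_general v hv0 hmul hadd s e he α horb r β
end

section
/- Let F = y^3 + A_2 y^2 + A_1 y + A_0 with A_i ∈ K[x], deg A_2 ≤ 2, deg A_1 ≤ 3, deg A_0 ≤ 4, defining a smooth plane quartic via the normal form. If the discriminant Δ_F of F (as a cubic in y, a polynomial in x) has degree 10, then the corresponding point x = ∞ of ℙ¹_K is not a branch point of the degree-3 covering φ : Y → ℙ¹_K obtained by projection. -/
/-!
Writing `a, b, c` for the top coefficients of `A₂, A₁, A₀`, the only terms of `Δ_F` that reach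
degree `10` are `A₂²A₁²` and `A₂³A₀`, so its `x¹⁰`-coefficient is `a²(b² - 4ac)`. If it is nonzero,
the quartic part `x²(a y² + b x y + c x²)` of `F` has, besides `x = 0`, two distinct projective
roots, so the fibre over `∞` consists of three distinct points.
-/

open Polynomial

section CoeffBounds

variable {R : Type*} [Semiring R] {p q : R[X]} {m n k : ℕ}

lemma coeff_mul_of_natDegree_le_of_add_eq (hp : p.natDegree ≤ m) (hq : q.natDegree ≤ n)
    (h : m + n = k) : (p * q).coeff k = p.coeff m * q.coeff n :=
  h ▸ coeff_mul_add_eq_of_natDegree_le hp hq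

lemma coeff_pow_of_natDegree_le_of_mul_eq (hp : p.natDegree ≤ n) (h : m * n = k) :
    (p ^ m).coeff k = p.coeff n ^ m :=
  h ▸ coeff_pow_of_natDegree_le hp

end CoeffBounds

def cubicDisc {R : Type*} [CommRing R] (a₂ a₁ a₀ : R) : R :=
  a₂ ^ 2 * a₁ ^ 2 - 4 * a₁ ^ 3 - 4 * a₂ ^ 3 * a₀ - 27 * a₀ ^ 2 + 18 * a₂ * a₁ * a₀

lemma coeff_disc_ten {R : Type*} [CommRing R] {A2 A1 A0 : R[X]}
    (hA2 : A2.natDegree ≤ 2) (hA1 : A1.natDegree ≤ 3) (hA0 : A0.natDegree ≤ 4) :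
    (cubicDisc A2 A1 A0).coeff 10
      = A2.coeff 2 ^ 2 * discrim (A2.coeff 2) (A1.coeff 3) (A0.coeff 4) := by
  have hA2A1 : (A2 ^ 2 * A1 ^ 2).coeff 10 = A2.coeff 2 ^ 2 * A1.coeff 3 ^ 2 := by
    rw [coeff_mul_of_natDegree_le_of_add_eq (natDegree_pow_le_of_le 2 hA2)
        (natDegree_pow_le_of_le 2 hA1) rfl,
      coeff_pow_of_natDegree_le_of_mul_eq hA2 rfl, coeff_pow_of_natDegree_le_of_mul_eq hA1 rfl]
  have hA2A0 : (A2 ^ 3 * A0).coeff 10 = A2.coeff 2 ^ 3 * A0.coeff 4 := by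
    rw [coeff_mul_of_natDegree_le_of_add_eq (natDegree_pow_le_of_le 3 hA2) hA0 rfl,
      coeff_pow_of_natDegree_le_of_mul_eq hA2 rfl]
  have hA1' : (A1 ^ 3).coeff 10 = 0 :=
    coeff_eq_zero_of_natDegree_lt ((natDegree_pow_le_of_le 3 hA1).trans_lt (by norm_num))
  have hA0' : (A0 ^ 2).coeff 10 = 0 :=
    coeff_eq_zero_of_natDegree_lt ((natDegree_pow_le_of_le 2 hA0).trans_lt (by norm_num))
  have hA2A1A0 : (A2 * A1 * A0).coeff 10 = 0 :=
    coeff_eq_zero_of_natDegree_lt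
      ((natDegree_mul_le_of_le (natDegree_mul_le_of_le hA2 hA1) hA0).trans_lt (by norm_num))
  have hdisc : cubicDisc A2 A1 A0 = A2 ^ 2 * A1 ^ 2 - 4 * A1 ^ 3 - 4 * (A2 ^ 3 * A0)
      - 27 * A0 ^ 2 + 18 * (A2 * A1 * A0) := by
    rw [cubicDisc]; ring
  simp only [hdisc, coeff_add, coeff_sub, coeff_ofNat_mul, hA2A1, hA2A0, hA1', hA0', hA2A1A0,
    discrim]
  ring

section Quadratic

variable {L : Type*} [Field L] {a b c : L}

lemma exists_factorization_of_discrim_ne_zero [IsAlgClosed L] (ha : a ≠ 0)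
    (hd : discrim a b c ≠ 0) :
    ∃ y₁ y₂ : L, y₁ ≠ y₂ ∧ ∀ s t : L,
      a * t ^ 2 + b * s * t + c * s ^ 2 = a * (t - y₁ * s) * (t - y₂ * s) := by
  obtain ⟨y₁, hy₁⟩ := IsAlgClosed.exists_root (C a * X ^ 2 + C b * X + C c)
    (by rw [degree_quadratic ha]; decide)
  have hroot : a * y₁ ^ 2 + b * y₁ + c = 0 := by simpa using hy₁
  -- the second root is read off Vieta's formula `a (y₁ + y₂) = -b`
  refine ⟨y₁, -y₁ - b / a, fun h => hd ?_, fun s t => ?_⟩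
  · have hb : b = -2 * a * y₁ := by field_simp at h; linear_combination h
    rw [discrim]; linear_combination (-4 * a) * hroot + (b + 2 * a * y₁) * hb
  · field_simp
    linear_combination s ^ 2 * hroot

lemma quartic_eq_zero_iff {y₁ y₂ : L} (ha : a ≠ 0)
    (hfact : ∀ s t : L, a * t ^ 2 + b * s * t + c * s ^ 2 = a * (t - y₁ * s) * (t - y₂ * s))
    (x y : L) :
    a * x ^ 2 * y ^ 2 + b * x ^ 3 * y + c * x ^ 4 = 0 ↔ x = 0 ∨ y = x * y₁ ∨ y = x * y₂ := by
  have hsplit : a * x ^ 2 * y ^ 2 + b * x ^ 3 * y + c * x ^ 4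
      = x ^ 2 * (a * (y - x * y₁) * (y - x * y₂)) := by
    rw [← mul_comm y₁, ← mul_comm y₂, ← hfact]; ring
  simp [hsplit, ha, sub_eq_zero]

end Quadratic

section ProjectiveLine

variable {L : Type*} [Field L] {q : L × L}

lemma exists_smul_zero_one_eq_iff : (∃ c : L, c • ((0 : L), (1 : L)) = q) ↔ q.1 = 0 :=
  ⟨fun ⟨c, hc⟩ => by simp [← hc], fun h => ⟨q.2, by ext <;> simp [h]⟩⟩

lemma exists_smul_one_eq_iff {y : L} : (∃ c : L, c • ((1 : L), y) = q) ↔ q.2 = q.1 * y :=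
  ⟨fun ⟨c, hc⟩ => by simp [← hc], fun h => ⟨q.1, by ext <;> simp [h]⟩⟩

end ProjectiveLine

theorem stmt_13_general {K : Type*} [Field K]
    (A2 A1 A0 : Polynomial K)
    (hA2 : A2.natDegree ≤ 2) (hA1 : A1.natDegree ≤ 3) (hA0 : A0.natDegree ≤ 4)
    (hΔ : (A2 ^ 2 * A1 ^ 2 - 4 * A1 ^ 3 - 4 * A2 ^ 3 * A0 - 27 * A0 ^ 2
      + 18 * A2 * A1 * A0).natDegree = 10) :
    let L := AlgebraicClosure K
    let H : L × L → L := fun p =>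
      algebraMap K L (A2.coeff 2) * p.1 ^ 2 * p.2 ^ 2
        + algebraMap K L (A1.coeff 3) * p.1 ^ 3 * p.2
        + algebraMap K L (A0.coeff 4) * p.1 ^ 4
    ∃ p1 p2 p3 : L × L,
      p1 ≠ 0 ∧ p2 ≠ 0 ∧ p3 ≠ 0 ∧ H p1 = 0 ∧ H p2 = 0 ∧ H p3 = 0 ∧
      (¬∃ c : L, c • p1 = p2) ∧ (¬∃ c : L, c • p1 = p3) ∧ (¬∃ c : L, c • p2 = p3) ∧
      ∀ q : L × L, q ≠ 0 → H q = 0 →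
        (∃ c : L, c • p1 = q) ∨ (∃ c : L, c • p2 = q) ∨ (∃ c : L, c • p3 = q) := by
  intro L H
  change (cubicDisc A2 A1 A0).natDegree = 10 at hΔ
  have hcoeff : (cubicDisc A2 A1 A0).coeff 10 ≠ 0 := by
    rw [← hΔ, coeff_natDegree, leadingCoeff_ne_zero]
    exact ne_zero_of_natDegree_gt (n := 0) (by omega)
  rw [coeff_disc_ten hA2 hA1 hA0] at hcoeff
  have ha : algebraMap K L (A2.coeff 2) ≠ 0 := by simpa using left_ne_zero_of_mul hcoeff
  have hd : discrim (algebraMap K L (A2.coeff 2)) (algebraMap K L (A1.coeff 3))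
      (algebraMap K L (A0.coeff 4)) ≠ 0 := by
    simpa [discrim, map_ofNat] using
      (map_ne_zero (algebraMap K L)).mpr (right_ne_zero_of_mul hcoeff)
  obtain ⟨y₁, y₂, hy, hfact⟩ := exists_factorization_of_discrim_ne_zero ha hd
  have hH (q : L × L) : H q = 0 ↔ q.1 = 0 ∨ q.2 = q.1 * y₁ ∨ q.2 = q.1 * y₂ :=
    quartic_eq_zero_iff ha hfact _ _
  refine ⟨(0, 1), (1, y₁), (1, y₂), by simp, by simp, by simp, (hH _).2 (by simp),
    (hH _).2 (by simp), (hH _).2 (by simp), ?_, ?_, ?_, fun q _ hq => ?_⟩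
  all_goals simp only [exists_smul_zero_one_eq_iff, exists_smul_one_eq_iff]
  · simp
  · simp
  · simpa using hy.symm
  · exact (hH q).1 hq

/-- If the `y`-discriminant of the plane-quartic normal form
`F = y³ + A₂(x)y² + A₁(x)y + A₀(x)` (with `deg A₂ ≤ 2`, `deg A₁ ≤ 3`, `deg A₀ ≤ 4`)
has degree exactly `10`, then `∞` is not a branch point of the degree-3 projection
`φ : Y → ℙ¹`: the fiber of the projective quartic over `∞`, i.e. the projective zero
locus of the degree-4 homogeneous part
`a₂₂x²y² + a₁₃x³y + a₀₄x⁴` of `F`, consists of exactly three distinct points over the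
algebraic closure. -/
theorem stmt_13 {K : Type*} [Field K] (h3 : (3 : K) ≠ 0)
    (A2 A1 A0 : Polynomial K)
    (hA2 : A2.natDegree ≤ 2) (hA1 : A1.natDegree ≤ 3) (hA0 : A0.natDegree ≤ 4)
    (hΔ : (A2 ^ 2 * A1 ^ 2 - 4 * A1 ^ 3 - 4 * A2 ^ 3 * A0 - 27 * A0 ^ 2
      + 18 * A2 * A1 * A0).natDegree = 10) :
    let L := AlgebraicClosure K
    let H : L × L → L := fun p =>
      algebraMap K L (A2.coeff 2) * p.1 ^ 2 * p.2 ^ 2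
        + algebraMap K L (A1.coeff 3) * p.1 ^ 3 * p.2
        + algebraMap K L (A0.coeff 4) * p.1 ^ 4
    ∃ p1 p2 p3 : L × L,
      p1 ≠ 0 ∧ p2 ≠ 0 ∧ p3 ≠ 0 ∧ H p1 = 0 ∧ H p2 = 0 ∧ H p3 = 0 ∧
      (¬∃ c : L, c • p1 = p2) ∧ (¬∃ c : L, c • p1 = p3) ∧ (¬∃ c : L, c • p2 = p3) ∧
      ∀ q : L × L, q ≠ 0 → H q = 0 →
        (∃ c : L, c • p1 = q) ∨ (∃ c : L, c • p2 = q) ∨ (∃ c : L, c • p3 = q) :=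
  stmt_13_general A2 A1 A0 hA2 hA1 hA0 hΔ
end
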